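/- A nonconstant convex domain of the form D = { (w,z) ∈ ℂ² : Re w + φ(z) < 0 } whose boundary contains a nontrivial one-dimensional analytic disc (i.e., a nonconstant holomorphic disc contained in ∂D) cannot be biholomorphic to the unit ball B². -/

import Mathlib

/-!
Convexity of `D` makes `φ` continuous, so along the disc `Re w + φ z = 0`, and the translates
`d τ + (s, 0)` lie in `D` exactly when `Re s < 0`. Carry them into the ball by `F`. For fixed `s`,
`τ ↦ F (d τ + (s, 0))` is a holomorphic disc in the ball; as `Re s → 0` its centre tends to the
sphere, because `G` is continuous and `d 0 + (s, 0)` leaves every compact subset of `D`; and a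
holomorphic disc whose centre is close to the sphere is uniformly close to constant on compacts
(Borel–Carathéodory). Hence `s ↦ F (d t + (s, 0)) - F (d 0 + (s, 0))` is bounded and holomorphic
on the left half-plane with zero boundary values, so it vanishes by Phragmén–Lindelöf, and
injectivity of `F` gives `d t = d 0`.
-/

open Metric Complex Set Filter Topology Asymptotics
open scoped InnerProductSpace

theorem convexOn_of_convex_setOf_re_add_lt {V : Type*} [AddCommGroup V] [Module ℝ V] {φ : V → ℝ}
    (h : Convex ℝ {p : ℂ × V | p.1.re + φ p.2 < 0}) : ConvexOn ℝ univ φ := by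
  refine ⟨convex_univ, fun z₁ _ z₂ _ a b ha hb hab => le_of_forall_pos_le_add fun ε hε => ?_⟩
  have hmem (z : V) : (((-φ z - ε : ℝ) : ℂ), z) ∈ {p : ℂ × V | p.1.re + φ p.2 < 0} := by
    simp only [mem_ofPred_eq, ofReal_re]
    linarith
  have := h (hmem z₁) (hmem z₂) ha hb hab
  simp only [mem_ofPred_eq, Prod.smul_mk, Prod.mk_add_mk, add_re, smul_re, ofReal_re,
    smul_eq_mul] at this ⊢
  have hεab : a * ε + b * ε = ε := by rw [← add_mul, hab, one_mul]
  linarith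

theorem norm_sub_sq_le_of_mapsTo_ball {E : Type*} [NormedAddCommGroup E] [InnerProductSpace ℂ E]
    {f : ℂ → E} (hd : DifferentiableOn ℂ f (ball 0 1)) (hf : MapsTo f (ball 0 1) (ball 0 1))
    {τ : ℂ} (hτ : τ ∈ ball 0 1) :
    ‖f τ - f 0‖ ^ 2 ≤ 2 * (1 - ‖f 0‖) * (1 + ‖τ‖) / (1 - ‖τ‖) := by
  set x := f 0
  have hx : ‖x‖ < 1 := mem_ball_zero_iff.mp (hf (mem_ball_self one_pos))
  have hτ1 : ‖τ‖ < 1 := mem_ball_zero_iff.mp hτ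
  have hfτ : ‖f τ‖ < 1 := mem_ball_zero_iff.mp (hf hτ)
  have re_inner_sub (w : E) : (⟪x, w - x⟫_ℂ).re = (⟪w, x⟫_ℂ).re - ‖x‖ ^ 2 := by
    have hsymm := inner_re_symm (𝕜 := ℂ) x w
    have hself := inner_self_eq_norm_sq (𝕜 := ℂ) x
    rw [RCLike.re_to_complex, RCLike.re_to_complex] at hsymm
    rw [RCLike.re_to_complex] at hself
    rw [inner_sub_right, sub_re, hsymm, hself]
  -- By Cauchy–Schwarz, `re ⟪x, f w - x⟫ ≤ ‖x‖ - ‖x‖ ^ 2 ≤ 1 - ‖x‖`.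
  have hre : MapsTo (fun w => ⟪x, f w - x⟫_ℂ) (ball 0 1) {z | z.re ≤ 1 - ‖x‖} := by
    intro w hw
    have hfw : ‖f w‖ < 1 := mem_ball_zero_iff.mp (hf hw)
    have := re_inner_le_norm (𝕜 := ℂ) (f w) x
    rw [RCLike.re_to_complex] at this
    simp only [mem_ofPred_eq, re_inner_sub]
    nlinarith [norm_nonneg x]
  have hinner : ‖⟪x, f τ - x⟫_ℂ‖ ≤ 2 * (1 - ‖x‖) * ‖τ‖ / (1 - ‖τ‖) :=
    borelCaratheodory_zero (by linarith) ((innerSL ℂ x).differentiable.comp_differentiableOn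
      (hd.sub_const x)) hre one_pos hτ (by simp [x])
  have hre_le : ‖x‖ ^ 2 - (⟪f τ, x⟫_ℂ).re ≤ 2 * (1 - ‖x‖) * ‖τ‖ / (1 - ‖τ‖) := by
    linarith [re_inner_sub (f τ), neg_abs_le (⟪x, f τ - x⟫_ℂ).re, abs_re_le_norm ⟪x, f τ - x⟫_ℂ,
      hinner]
  have hnorm : ‖f τ‖ ^ 2 - ‖x‖ ^ 2 ≤ 2 * (1 - ‖x‖) := by
    nlinarith [norm_nonneg x, norm_nonneg (f τ)]
  calc ‖f τ - x‖ ^ 2 = ‖f τ‖ ^ 2 - ‖x‖ ^ 2 + 2 * (‖x‖ ^ 2 - (⟪f τ, x⟫_ℂ).re) := by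
        rw [norm_sub_sq (𝕜 := ℂ), RCLike.re_to_complex]; ring
    _ ≤ 2 * (1 - ‖x‖) + 2 * (2 * (1 - ‖x‖) * ‖τ‖ / (1 - ‖τ‖)) := by gcongr
    _ = 2 * (1 - ‖x‖) * (1 + ‖τ‖) / (1 - ‖τ‖) := by field_simp [(sub_pos.2 hτ1).ne']; ring

theorem tendsto_sub_apply_zero_of_tendsto_norm_one {α E : Type*} [NormedAddCommGroup E]
    [InnerProductSpace ℂ E] {l : Filter α} {f : α → ℂ → E}
    (hd : ∀ᶠ k in l, DifferentiableOn ℂ (f k) (ball 0 1))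
    (hf : ∀ᶠ k in l, MapsTo (f k) (ball 0 1) (ball 0 1))
    (h1 : Tendsto (fun k => ‖f k 0‖) l (𝓝 1)) {t : ℂ} (ht : t ∈ ball 0 1) :
    Tendsto (fun k => f k t - f k 0) l (𝓝 0) := by
  have hsq : Tendsto (fun k => ‖f k t - f k 0‖ ^ 2) l (𝓝 0) := by
    refine squeeze_zero' (.of_forall fun k => by positivity)
      (g := fun k => 2 * (1 - ‖f k 0‖) * (1 + ‖t‖) / (1 - ‖t‖)) ?_ ?_
    · filter_upwards [hd, hf] with k hdk hfk
      exact norm_sub_sq_le_of_mapsTo_ball hdk hfk ht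
    · simpa using (((h1.const_sub 1).const_mul 2).mul_const (1 + ‖t‖)).div_const (1 - ‖t‖)
  rw [tendsto_zero_iff_norm_tendsto_zero]
  simpa using hsq.sqrt

theorem tendsto_norm_nhds_one_of_leftInvOn {α X E : Type*} [TopologicalSpace X] [T2Space X]
    [NormedAddCommGroup E] [ProperSpace E] {D : Set X} {F : X → E} {G : E → X}
    (hFD : MapsTo F D (ball 0 1)) (hG : ContinuousOn G (ball 0 1)) (hGD : MapsTo G (ball 0 1) D)
    (hGF : LeftInvOn G F D) {l : Filter α} {p : α → X} {a : X} (hp : Tendsto p l (𝓝 a))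
    (hpD : ∀ᶠ k in l, p k ∈ D) (ha : a ∉ D) : Tendsto (fun k => ‖F (p k)‖) l (𝓝 1) := by
  refine tendsto_order.2 ⟨fun b hb => ?_, fun b hb => ?_⟩
  · have hK : IsCompact (G '' closedBall 0 b) :=
      (isCompact_closedBall 0 b).image_of_continuousOn (hG.mono (closedBall_subset_ball hb))
    have haK : a ∉ G '' closedBall 0 b := by
      rintro ⟨q, hq, rfl⟩
      exact ha (hGD (closedBall_subset_ball hb hq))
    filter_upwards [hpD, hp (hK.isClosed.isOpen_compl.mem_nhds haK)] with k hkD hkK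
    by_contra! hle
    exact hkK ⟨F (p k), mem_closedBall_zero_iff.2 hle, hGF hkD⟩
  · filter_upwards [hpD] with k hk
    exact (mem_ball_zero_iff.1 (hFD hk)).trans hb

theorem eqOn_zero_of_tendsto_zero_on_imaginary_axis {E : Type*} [NormedAddCommGroup E]
    [NormedSpace ℂ E] {f : ℂ → E} {C : ℝ} (hd : DifferentiableOn ℂ f {z | z.re < 0})
    (hC : ∀ z : ℂ, z.re < 0 → ‖f z‖ ≤ C)
    (hlim : ∀ z : ℂ, z.re = 0 → Tendsto f (𝓝[{z | z.re < 0}] z) (𝓝 0)) :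
    EqOn f 0 {z | z.re < 0} := by
  -- Reflect to the right half-plane and extend by `0`, to get a function continuous up to the
  -- imaginary axis to which Phragmén–Lindelöf applies.
  set H : Set ℂ := {z | 0 < z.re}
  set g : ℂ → E := fun z => if 0 < z.re then f (-z) else 0
  have hneg : MapsTo Neg.neg H {z : ℂ | z.re < 0} := fun z (hz : 0 < z.re) => by simpa using hz
  have hgH : EqOn g (f ∘ Neg.neg) H := fun z hz => if_pos hz
  have hgd : DifferentiableOn ℂ g H := (hd.comp differentiable_neg.differentiableOn hneg).congr hgH
  have hgc : ContinuousOn g (closure H) := by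
    intro z hz
    rw [closure_setOfPred_lt_re] at hz
    rcases (show 0 ≤ z.re from hz).lt_or_eq with hz | hz
    · exact (hgd.differentiableAt ((isOpen_lt continuous_const continuous_re).mem_nhds hz))
        |>.continuousAt.continuousWithinAt
    have hclosure : closure H = H ∪ {z | z.re = 0} := by
      rw [closure_setOfPred_lt_re]
      ext w
      simp only [mem_ofPred_eq, mem_union, H, le_iff_lt_or_eq, eq_comm]
    have hgz : g z = 0 := if_neg hz.not_lt
    rw [ContinuousWithinAt, hclosure, nhdsWithin_union, hgz]
    refine Tendsto.sup ?_ (tendsto_const_nhds.congr' ?_)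
    · refine ((hlim (-z) (by simp [← hz])).comp ?_).congr' (eventually_nhdsWithin_of_forall
        fun w hw => (hgH hw).symm)
      exact continuous_neg.continuousWithinAt.tendsto_nhdsWithin hneg
    · exact eventually_nhdsWithin_of_forall fun w (hw : w.re = 0) => (if_neg hw.not_gt).symm
  have hgb : ∀ z, ‖g z‖ ≤ max C 0 := fun z => by
    by_cases hz : 0 < z.re
    · simp only [g, if_pos hz]
      exact (hC _ (by simpa using hz)).trans (le_max_left _ _)
    · simp [g, if_neg hz]
  intro z (hz : z.re < 0)
  have := PhragmenLindelof.right_half_plane_of_bounded_on_real (C := 0) ⟨hgd, hgc⟩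
    ⟨0, two_pos, 0, .of_bound (max C 0) (.of_forall fun z => by simpa using hgb z)⟩
    (isBoundedUnder_of ⟨max C 0, fun x => hgb x⟩) (fun x => by simp [g])
    (show 0 ≤ (-z).re by simp; linarith)
  simpa [g, hz] using this

theorem eq_apply_zero_of_leftInvOn_ball {X E : Type*} [NormedAddCommGroup X] [NormedSpace ℂ X]
    [NormedAddCommGroup E] [InnerProductSpace ℂ E] [ProperSpace E] {D : Set X} {F : X → E}
    {G : E → X} (hF : DifferentiableOn ℂ F D) (hFD : MapsTo F D (ball 0 1))
    (hG : ContinuousOn G (ball 0 1)) (hGD : MapsTo G (ball 0 1) D) (hGF : LeftInvOn G F D)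
    {d : ℂ → X} (hd : DifferentiableOn ℂ d (ball 0 1)) {v : X}
    (hdD : ∀ τ ∈ ball (0 : ℂ) 1, ∀ s : ℂ, d τ + s • v ∈ D ↔ s.re < 0) {t : ℂ}
    (ht : t ∈ ball 0 1) : d t = d 0 := by
  have h0 : (0 : ℂ) ∈ ball (0 : ℂ) 1 := mem_ball_self one_pos
  have hline : ∀ τ ∈ ball (0 : ℂ) 1,
      DifferentiableOn ℂ (fun s : ℂ => F (d τ + s • v)) {s | s.re < 0} := fun τ hτ =>
    hF.comp ((differentiableOn_id.smul_const v).const_add _) fun s hs => (hdD τ hτ s).2 hs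
  have hdisc : ∀ s : ℂ, s.re < 0 → DifferentiableOn ℂ (fun τ => F (d τ + s • v)) (ball 0 1) ∧
      MapsTo (fun τ => F (d τ + s • v)) (ball 0 1) (ball 0 1) := fun s hs =>
    ⟨hF.comp (hd.add_const _) fun τ hτ => (hdD τ hτ s).2 hs, fun τ hτ => hFD ((hdD τ hτ s).2 hs)⟩
  have hW : EqOn (fun s : ℂ => F (d t + s • v) - F (d 0 + s • v)) 0 {s : ℂ | s.re < 0} := by
    refine eqOn_zero_of_tendsto_zero_on_imaginary_axis (C := 2) ((hline t ht).sub (hline 0 h0))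
      (fun s hs => ?_) fun s₀ hs₀ => ?_
    · have h1 := mem_ball_zero_iff.1 (hFD ((hdD t ht s).2 hs))
      have h2 := mem_ball_zero_iff.1 (hFD ((hdD 0 h0 s).2 hs))
      linarith [norm_sub_le (F (d t + s • v)) (F (d 0 + s • v))]
    · have hin : ∀ᶠ s in 𝓝[{s : ℂ | s.re < 0}] s₀, s.re < 0 := self_mem_nhdsWithin
      refine tendsto_sub_apply_zero_of_tendsto_norm_one (hin.mono fun s hs => (hdisc s hs).1)
        (hin.mono fun s hs => (hdisc s hs).2) ?_ ht
      refine tendsto_norm_nhds_one_of_leftInvOn hFD hG hGD hGF ?_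
        (hin.mono fun s hs => (hdD 0 h0 s).2 hs) fun h => ((hdD 0 h0 s₀).1 h).ne hs₀
      exact ((continuous_id.smul continuous_const).const_add _).continuousWithinAt.tendsto
  have hW1 := sub_eq_zero.1 (hW (show (-1 : ℂ) ∈ {s : ℂ | s.re < 0} by norm_num))
  refine add_right_cancel (b := (-1 : ℂ) • v) ?_
  rw [← hGF ((hdD t ht _).2 (by norm_num)), ← hGF ((hdD 0 h0 _).2 (by norm_num))]
  exact congrArg G hW1

theorem WithLp.prod_mem_ball_zero_one_iff {α β : Type*} [SeminormedAddCommGroup α]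
    [SeminormedAddCommGroup β] (q : WithLp 2 (α × β)) :
    q ∈ ball 0 1 ↔ ‖q.ofLp.1‖ ^ 2 + ‖q.ofLp.2‖ ^ 2 < 1 := by
  rw [mem_ball_zero_iff, ← sq_lt_one_iff₀ (norm_nonneg _), WithLp.prod_norm_sq_eq_of_L2]
  rfl

/-- A convex rigid-type domain `D = {Re w + φ(z) < 0} ⊆ ℂ²` whose boundary
contains a nonconstant analytic disc cannot be biholomorphic to the unit ball. -/
theorem no_biholo_ball_with_disc_in_boundary (φ : ℂ → ℝ)
    (D : Set (ℂ × ℂ)) (hD : D = {p : ℂ × ℂ | p.1.re + φ p.2 < 0})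
    (hconv : Convex ℝ D)
    (d : ℂ → ℂ × ℂ) (hd : DifferentiableOn ℂ d (ball (0 : ℂ) 1))
    (hdnc : ¬ ∃ q : ℂ × ℂ, ∀ t ∈ ball (0 : ℂ) 1, d t = q)
    (hdbd : d '' ball (0 : ℂ) 1 ⊆ frontier D) :
    ¬ ∃ F G : ℂ × ℂ → ℂ × ℂ,
      DifferentiableOn ℂ F D ∧
      DifferentiableOn ℂ G {p : ℂ × ℂ | ‖p.1‖ ^ 2 + ‖p.2‖ ^ 2 < 1} ∧
      Set.MapsTo F D {p : ℂ × ℂ | ‖p.1‖ ^ 2 + ‖p.2‖ ^ 2 < 1} ∧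
      Set.MapsTo G {p : ℂ × ℂ | ‖p.1‖ ^ 2 + ‖p.2‖ ^ 2 < 1} D ∧
      (∀ p ∈ D, G (F p) = p) ∧
      (∀ p ∈ {p : ℂ × ℂ | ‖p.1‖ ^ 2 + ‖p.2‖ ^ 2 < 1}, F (G p) = p) := by
  rintro ⟨F, G, hF, hG, hFD, hGD, hGF, -⟩
  subst hD
  have hφ : Continuous φ := continuousOn_univ.1
    ((convexOn_of_convex_setOf_re_add_lt hconv).continuousOn isOpen_univ)
  have hdD : ∀ τ ∈ ball (0 : ℂ) 1, ∀ s : ℂ,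
      d τ + s • ((1 : ℂ), (0 : ℂ)) ∈ {p : ℂ × ℂ | p.1.re + φ p.2 < 0} ↔ s.re < 0 := by
    intro τ hτ s
    have hfr : (d τ).1.re + φ (d τ).2 = 0 :=
      frontier_lt_subset_eq (f := fun p : ℂ × ℂ => p.1.re + φ p.2) (by fun_prop)
        continuous_const (hdbd ⟨τ, hτ, rfl⟩)
    simp only [mem_ofPred_eq, Prod.smul_mk, smul_eq_mul, mul_one, mul_zero, Prod.fst_add,
      Prod.snd_add, add_zero, add_re]
    constructor <;> intro h <;> linarith
  have hball := WithLp.prod_mem_ball_zero_one_iff (α := ℂ) (β := ℂ)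
  refine hdnc ⟨d 0, fun t ht => eq_apply_zero_of_leftInvOn_ball (F := WithLp.toLp 2 ∘ F)
    (G := G ∘ WithLp.ofLp) ?_ (fun p hp => (hball _).2 (hFD hp))
    (hG.continuousOn.comp (WithLp.prod_continuous_ofLp 2 ℂ ℂ).continuousOn
      fun q hq => (hball q).1 hq) (fun q hq => hGD ((hball q).1 hq))
    (fun p hp => hGF p hp) hd hdD ht⟩
  exact (WithLp.prodContinuousLinearEquiv 2 ℂ ℂ ℂ).symm.differentiable.comp_differentiableOn hF
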